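/- Let n, m be positive integers and split the index range Ĩ, J̃, K̃, L̃ ∈ {1, …, n+m} into a 'vector' range I, J, K ∈ {1, …, n} and a 'tensor' range M, N ∈ {n+1, …, n+m}. Let f_{IJ}^K be real constants antisymmetric in I, J, and let t_{I J̃}^{K̃} be real constants for I in the vector range, extended by t_{M J̃}^{K̃} := 0 for M in the tensor range. Assume: (1) the commutation relations Σ_{M̃} ( t_{I Ñ}^{M̃} t_{J M̃}^{L̃} − t_{J Ñ}^{M̃} t_{I M̃}^{L̃} ) = − Σ_K f_{IJ}^K t_{K Ñ}^{L̃} for all vector-range I, J; (2) the adjoint condition t_{IJ}^K = f_{IJ}^K whenever all three indices are in the vector range; and (3) the constraint t_{(J̃ K̃)}^I := (1/2)(t_{J̃ K̃}^I + t_{K̃ J̃}^I) = 0 whenever the upper index I is in the vector range. Then for all K in the vector range, all Ĩ, J̃, and all M in the tensor range, the identity Σ_{L̃} [ t_{K Ĩ}^{L̃} t_{(J̃ L̃)}^M + t_{K J̃}^{L̃} t_{(Ĩ L̃)}^M − t_{(Ĩ J̃)}^{L̃} t_{K L̃}^M ] = 0 holds, where t_{(Ã B̃)}^{C̃} := (1/2)(t_{Ã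 B̃}^{C̃} + t_{B̃ Ã}^{C̃}). -/
import Mathlib


noncomputable section

/-- The extension of the representation matrices `t_I` by zero on the tensor range:
`t_{M J̃}^{K̃} = 0` for `M` in the tensor range. -/
def tExt {n m : ℕ} (t : Fin n → (Fin n ⊕ Fin m) → (Fin n ⊕ Fin m) → ℝ) :
    (Fin n ⊕ Fin m) → (Fin n ⊕ Fin m) → (Fin n ⊕ Fin m) → ℝ
  | Sum.inl I => t I
  | Sum.inr _ => fun _ _ => 0

/-- The symmetrization `t_{(Ã B̃)}^{C̃} = (1/2)(t_{Ã B̃}^{C̃} + t_{B̃ Ã}^{C̃})` of the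
extended representation matrices. -/
def tSym {n m : ℕ} (t : Fin n → (Fin n ⊕ Fin m) → (Fin n ⊕ Fin m) → ℝ)
    (A B C : Fin n ⊕ Fin m) : ℝ :=
  (1 / 2) * (tExt t A B C + tExt t B A C)

/-- for representation matrices `t_I` of a gauge algebra acting on `n`
vector and `m` tensor multiplets (commutation relations with structure constants
`f_{IJ}^K`, adjoint action on the vector range, zero extension on the tensor range,
vanishing symmetric part with upper index in the vector range), the identity
`t_{K Ĩ}^{L̃} t_{(J̃ L̃)}^M + t_{K J̃}^{L̃} t_{(Ĩ L̃)}^M − t_{(Ĩ J̃)}^{L̃} t_{K L̃}^M = 0`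
(summed over `L̃`) holds. -/
theorem stmt_18 (n m : ℕ) (hn : 0 < n) (hm : 0 < m)
    (f : Fin n → Fin n → Fin n → ℝ)
    (hfanti : ∀ I J K, f I J K = - f J I K)
    (t : Fin n → (Fin n ⊕ Fin m) → (Fin n ⊕ Fin m) → ℝ)
    (hcomm : ∀ (I J : Fin n) (Nt Lt : Fin n ⊕ Fin m),
      ∑ Mt, (t I Nt Mt * t J Mt Lt - t J Nt Mt * t I Mt Lt)
        = - ∑ K, f I J K * t K Nt Lt)
    (hadj : ∀ I J K, t I (Sum.inl J) (Sum.inl K) = f I J K)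
    (hsymvec : ∀ (Jt Kt : Fin n ⊕ Fin m) (I : Fin n), tSym t Jt Kt (Sum.inl I) = 0) :
    ∀ (K : Fin n) (It Jt : Fin n ⊕ Fin m) (M : Fin m),
      ∑ Lt, (t K It Lt * tSym t Jt Lt (Sum.inr M)
        + t K Jt Lt * tSym t It Lt (Sum.inr M)
        - tSym t It Jt Lt * t K Lt (Sum.inr M)) = 0 := by
  -- `t` vanishes when the lower index is in the tensor range and the upper in the
  -- vector range
  have hz : ∀ (I : Fin n) (b : Fin m) (P : Fin n), t I (Sum.inr b) (Sum.inl P) = 0 := by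
    intro I b P
    have h := hsymvec (Sum.inl I) (Sum.inr b) P
    simp [tSym, tExt] at h
    exact h
  intro K It Jt M
  rw [Fintype.sum_sum_type]
  rcases It with I | a <;> rcases Jt with J | b
  · -- both vector
    have h1 := hcomm K J (Sum.inl I) (Sum.inr M)
    have h2 := hcomm K I (Sum.inl J) (Sum.inr M)
    rw [Fintype.sum_sum_type] at h1 h2
    have gn : ∑ P : Fin n, (t K (Sum.inl I) (Sum.inl P) * tSym t (Sum.inl J) (Sum.inl P) (Sum.inr M)
          + t K (Sum.inl J) (Sum.inl P) * tSym t (Sum.inl I) (Sum.inl P) (Sum.inr M)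
          - tSym t (Sum.inl I) (Sum.inl J) (Sum.inl P) * t K (Sum.inl P) (Sum.inr M))
        = ∑ P : Fin n, ((1/2) * (t K (Sum.inl I) (Sum.inl P) * t J (Sum.inl P) (Sum.inr M)
              - t J (Sum.inl I) (Sum.inl P) * t K (Sum.inl P) (Sum.inr M))
          + (1/2) * (t K (Sum.inl J) (Sum.inl P) * t I (Sum.inl P) (Sum.inr M)
              - t I (Sum.inl J) (Sum.inl P) * t K (Sum.inl P) (Sum.inr M))
          + (1/2) * (f K J P * t P (Sum.inl I) (Sum.inr M))
          + (1/2) * (f K I P * t P (Sum.inl J) (Sum.inr M))) := by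
      refine Finset.sum_congr rfl fun P _ => ?_
      rw [hsymvec]
      simp only [tSym, tExt, hadj]
      rw [hfanti J I]
      ring
    have gm : ∑ c : Fin m, (t K (Sum.inl I) (Sum.inr c) * tSym t (Sum.inl J) (Sum.inr c) (Sum.inr M)
          + t K (Sum.inl J) (Sum.inr c) * tSym t (Sum.inl I) (Sum.inr c) (Sum.inr M)
          - tSym t (Sum.inl I) (Sum.inl J) (Sum.inr c) * t K (Sum.inr c) (Sum.inr M))
        = ∑ c : Fin m, ((1/2) * (t K (Sum.inl I) (Sum.inr c) * t J (Sum.inr c) (Sum.inr M)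
              - t J (Sum.inl I) (Sum.inr c) * t K (Sum.inr c) (Sum.inr M))
          + (1/2) * (t K (Sum.inl J) (Sum.inr c) * t I (Sum.inr c) (Sum.inr M)
              - t I (Sum.inl J) (Sum.inr c) * t K (Sum.inr c) (Sum.inr M))) := by
      refine Finset.sum_congr rfl fun c _ => ?_
      simp only [tSym, tExt]
      ring
    rw [gn, gm]
    simp only [Finset.sum_add_distrib, ← Finset.mul_sum]
    linarith [h1, h2]
  · -- It vector, Jt tensor
    have h := hcomm K I (Sum.inr b) (Sum.inr M)
    rw [Fintype.sum_sum_type] at h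
    have hn0 : ∑ P : Fin n, (t K (Sum.inr b) (Sum.inl P) * t I (Sum.inl P) (Sum.inr M)
          - t I (Sum.inr b) (Sum.inl P) * t K (Sum.inl P) (Sum.inr M)) = 0 := by
      refine Finset.sum_eq_zero fun P _ => ?_
      rw [hz, hz]; ring
    have gn : ∑ P : Fin n, (t K (Sum.inl I) (Sum.inl P) * tSym t (Sum.inr b) (Sum.inl P) (Sum.inr M)
          + t K (Sum.inr b) (Sum.inl P) * tSym t (Sum.inl I) (Sum.inl P) (Sum.inr M)
          - tSym t (Sum.inl I) (Sum.inr b) (Sum.inl P) * t K (Sum.inl P) (Sum.inr M))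
        = ∑ P : Fin n, ((1/2) * (f K I P * t P (Sum.inr b) (Sum.inr M))) := by
      refine Finset.sum_congr rfl fun P _ => ?_
      rw [hsymvec, hz]
      simp only [tSym, tExt, hadj]
      ring
    have gm : ∑ c : Fin m, (t K (Sum.inl I) (Sum.inr c) * tSym t (Sum.inr b) (Sum.inr c) (Sum.inr M)
          + t K (Sum.inr b) (Sum.inr c) * tSym t (Sum.inl I) (Sum.inr c) (Sum.inr M)
          - tSym t (Sum.inl I) (Sum.inr b) (Sum.inr c) * t K (Sum.inr c) (Sum.inr M))
        = ∑ c : Fin m, ((1/2) * (t K (Sum.inr b) (Sum.inr c) * t I (Sum.inr c) (Sum.inr M)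
              - t I (Sum.inr b) (Sum.inr c) * t K (Sum.inr c) (Sum.inr M))) := by
      refine Finset.sum_congr rfl fun c _ => ?_
      simp only [tSym, tExt]
      ring
    rw [gn, gm]
    simp only [← Finset.mul_sum]
    linarith [h, hn0]
  · -- It tensor, Jt vector
    have h := hcomm K J (Sum.inr a) (Sum.inr M)
    rw [Fintype.sum_sum_type] at h
    have hn0 : ∑ P : Fin n, (t K (Sum.inr a) (Sum.inl P) * t J (Sum.inl P) (Sum.inr M)
          - t J (Sum.inr a) (Sum.inl P) * t K (Sum.inl P) (Sum.inr M)) = 0 := by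
      refine Finset.sum_eq_zero fun P _ => ?_
      rw [hz, hz]; ring
    have gn : ∑ P : Fin n, (t K (Sum.inr a) (Sum.inl P) * tSym t (Sum.inl J) (Sum.inl P) (Sum.inr M)
          + t K (Sum.inl J) (Sum.inl P) * tSym t (Sum.inr a) (Sum.inl P) (Sum.inr M)
          - tSym t (Sum.inr a) (Sum.inl J) (Sum.inl P) * t K (Sum.inl P) (Sum.inr M))
        = ∑ P : Fin n, ((1/2) * (f K J P * t P (Sum.inr a) (Sum.inr M))) := by
      refine Finset.sum_congr rfl fun P _ => ?_
      rw [hsymvec, hz]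
      simp only [tSym, tExt, hadj]
      ring
    have gm : ∑ c : Fin m, (t K (Sum.inr a) (Sum.inr c) * tSym t (Sum.inl J) (Sum.inr c) (Sum.inr M)
          + t K (Sum.inl J) (Sum.inr c) * tSym t (Sum.inr a) (Sum.inr c) (Sum.inr M)
          - tSym t (Sum.inr a) (Sum.inl J) (Sum.inr c) * t K (Sum.inr c) (Sum.inr M))
        = ∑ c : Fin m, ((1/2) * (t K (Sum.inr a) (Sum.inr c) * t J (Sum.inr c) (Sum.inr M)
              - t J (Sum.inr a) (Sum.inr c) * t K (Sum.inr c) (Sum.inr M))) := by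
      refine Finset.sum_congr rfl fun c _ => ?_
      simp only [tSym, tExt]
      ring
    rw [gn, gm]
    simp only [← Finset.mul_sum]
    linarith [h, hn0]
  · -- both tensor
    have gn : ∑ P : Fin n, (t K (Sum.inr a) (Sum.inl P) * tSym t (Sum.inr b) (Sum.inl P) (Sum.inr M)
          + t K (Sum.inr b) (Sum.inl P) * tSym t (Sum.inr a) (Sum.inl P) (Sum.inr M)
          - tSym t (Sum.inr a) (Sum.inr b) (Sum.inl P) * t K (Sum.inl P) (Sum.inr M))
        = 0 := by
      refine Finset.sum_eq_zero fun P _ => ?_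
      rw [hsymvec, hz, hz]; ring
    have gm : ∑ c : Fin m, (t K (Sum.inr a) (Sum.inr c) * tSym t (Sum.inr b) (Sum.inr c) (Sum.inr M)
          + t K (Sum.inr b) (Sum.inr c) * tSym t (Sum.inr a) (Sum.inr c) (Sum.inr M)
          - tSym t (Sum.inr a) (Sum.inr b) (Sum.inr c) * t K (Sum.inr c) (Sum.inr M))
        = 0 := by
      refine Finset.sum_eq_zero fun c _ => ?_
      simp [tSym, tExt]
    rw [gn, gm]
    ring
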